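/- arXiv:2402.10152 — 2 statements merged into one kernel-verified Lean document; each statement's English description precedes it below -/
import Mathlib

section
/- If q is a polynomial of degree at most d-1 satisfying q^(k)(-1) = u^(k)(-1) + O(h^{d-k}) for k = 0,...,k_d-1 and q(-1+kαh) = u(-1+kαh) + O(h^d) for k = 1,...,d-k_d, where u is a C^d function, then for any point x with |x - (-1)| ≤ C·h, |q(x) - u(x)| = O(h^d). -/
open Polynomial Finset Metric Nat

/-!
Let `T` be the Taylor polynomial of `u` of degree `< d` at `-1`. Taylor's theorem makes `u - T`
of size `O(h^d)` within `O(h)` of `-1`, so `r = q - T` is a polynomial of degree `< d` whose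
Hermite data are `O(h^d)`. The substitution `x = -1 + h t` turns these data into data of the
fixed problem (Taylor coefficients of order `< kd` at `0`, values at the nodes `k * α`), which
determines a polynomial of degree `< d` uniquely. Its inverse is a linear map between
finite-dimensional spaces, hence bounded, so the rescaled `r` is `O(h^d)` on `|t| ≤ C`.
-/

theorem LinearMap.exists_norm_le_mul_norm_of_injective {𝕜 V W U : Type*}
    [NontriviallyNormedField 𝕜] [CompleteSpace 𝕜] [AddCommGroup V] [Module 𝕜 V]
    [NormedAddCommGroup W] [NormedSpace 𝕜 W] [FiniteDimensional 𝕜 W]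
    [NormedAddCommGroup U] [NormedSpace 𝕜 U]
    (L : V →ₗ[𝕜] W) (hL : Function.Injective L) (Φ : V →ₗ[𝕜] U) :
    ∃ B, ∀ v, ‖Φ v‖ ≤ B * ‖L v‖ := by
  obtain ⟨g, hg⟩ := L.exists_leftInverse_of_injective (LinearMap.ker_eq_bot.2 hL)
  refine ⟨‖(Φ ∘ₗ g).toContinuousLinearMap‖, fun v => ?_⟩
  simpa [← LinearMap.comp_apply g L, hg] using (Φ ∘ₗ g).toContinuousLinearMap.le_opNorm (L v)

namespace Polynomial

variable {R : Type*} [CommRing R]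

/-- The data of the extrapolation problem at unit scale. Coefficients stand in for derivatives:
`(derivative^[j] p).eval 0 = j ! * p.coeff j`. -/
noncomputable def hermiteData (kd m : ℕ) (α : R) :
    R[X] →ₗ[R] (Fin kd → R) × (Icc 1 m → R) :=
  (LinearMap.pi fun j : Fin kd => lcoeff R j).prod
    (LinearMap.pi fun k : Icc 1 m => leval ((k : ℕ) * α))

@[simp]
theorem hermiteData_apply (kd m : ℕ) (α : R) (p : R[X]) :
    hermiteData kd m α p =
      (fun j : Fin kd => p.coeff j, fun k : Icc 1 m => p.eval ((k : ℕ) * α)) :=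
  rfl

theorem iterate_derivative_eval_eq_factorial_mul_taylor_coeff (p : R[X]) (a : R) (k : ℕ) :
    (derivative^[k] p).eval a = k ! * (taylor a p).coeff k := by
  rw [taylor_coeff, ← factorial_smul_hasseDeriv, LinearMap.smul_apply, eval_smul, nsmul_eq_mul]

theorem eq_zero_of_hermiteData_eq_zero [IsDomain R] [CharZero R] {d kd : ℕ} {α : R}
    (hα : α ≠ 0) {p : R[X]} (hp : p.degree < d) (h : hermiteData kd (d - kd) α p = 0) :
    p = 0 := by
  simp only [hermiteData_apply, Prod.mk_eq_zero, funext_iff, Pi.zero_apply] at h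
  obtain ⟨w, rfl⟩ : X ^ kd ∣ p := X_pow_dvd_iff.2 fun j hj => h.1 ⟨j, hj⟩
  rcases eq_or_ne w 0 with rfl | hw
  · rw [mul_zero]
  have hdeg : kd + w.natDegree < d := by
    rw [← natDegree_X_pow (R := R) kd, ← natDegree_mul (pow_ne_zero _ X_ne_zero) hw]
    exact (natDegree_lt_iff_degree_lt (mul_ne_zero (pow_ne_zero _ X_ne_zero) hw)).2 hp
  refine absurd (eq_zero_of_natDegree_lt_card_of_eval_eq_zero w
    (f := fun k : Icc 1 (d - kd) => ((k : ℕ) : R) * α) ?_ (fun k => ?_) ?_) hw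
  · intro k l hkl
    exact Subtype.ext (Nat.cast_injective (mul_right_cancel₀ hα hkl))
  · have hk := h.2 k
    rw [eval_mul, eval_pow, eval_X] at hk
    refine (mul_eq_zero.1 hk).resolve_left (pow_ne_zero _ (mul_ne_zero ?_ hα))
    have hk1 := (mem_Icc.1 k.2).1
    exact_mod_cast (by omega : (k : ℕ) ≠ 0)
  · simp only [Fintype.card_coe, Nat.card_Icc]
    omega

theorem exists_degree_lt_iterate_derivative_eval_eq {K : Type*} [Field K] [CharZero K]
    (a : K) (n : ℕ) (c : ℕ → K) :
    ∃ T : K[X], T.degree < n ∧ ∀ k < n, (derivative^[k] T).eval a = c k := by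
  set P : degreeLT K n := (degreeLTEquiv K n).symm fun i => c i / (i : ℕ)!
  have hP : ∀ k (hk : k < n), (P : K[X]).coeff k = c k / k ! := fun k hk =>
    congrFun ((degreeLTEquiv K n).apply_symm_apply _) ⟨k, hk⟩
  refine ⟨taylor (-a) P, by rw [degree_taylor]; exact mem_degreeLT.1 P.2, fun k hk => ?_⟩
  rw [iterate_derivative_eval_eq_factorial_mul_taylor_coeff, taylor_taylor, add_neg_cancel,
    taylor_zero, hP k hk]
  exact mul_div_cancel₀ (c k) (Nat.cast_ne_zero.2 k.factorial_ne_zero)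

theorem iteratedDeriv_eval {𝕜 : Type*} [NontriviallyNormedField 𝕜] (p : 𝕜[X]) (k : ℕ) :
    iteratedDeriv k (fun x => p.eval x) = fun x => (derivative^[k] p).eval x := by
  induction k with
  | zero => rfl
  | succ k ih =>
    ext x
    rw [iteratedDeriv_succ, ih, Function.iterate_succ_apply']
    exact Polynomial.deriv _

theorem exists_abs_eval_le_mul_norm_hermiteData {d kd : ℕ} {α : ℝ} (hα : α ≠ 0)
    (ρ : ℝ) :
    ∃ B, 0 ≤ B ∧ ∀ p : ℝ[X], p.degree < d → ∀ t, |t| ≤ ρ →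
      |p.eval t| ≤ B * ‖hermiteData kd (d - kd) α p‖ := by
  set L := hermiteData kd (d - kd) α ∘ₗ (degreeLT ℝ d).subtype
  have hL : Function.Injective L := by
    refine (injective_iff_map_eq_zero L).2 fun p hp => Subtype.ext ?_
    exact eq_zero_of_hermiteData_eq_zero hα (mem_degreeLT.1 p.2) hp
  obtain ⟨B, hB⟩ := L.exists_norm_le_mul_norm_of_injective hL (degreeLTEquiv ℝ d).toLinearMap
  refine ⟨max B 0 * ∑ i : Fin d, |ρ| ^ (i : ℕ), by positivity, fun p hp t ht => ?_⟩
  have hpd : p ∈ degreeLT ℝ d := mem_degreeLT.2 hp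
  set c := degreeLTEquiv ℝ d ⟨p, hpd⟩
  have hc : ‖c‖ ≤ max B 0 * ‖hermiteData kd (d - kd) α p‖ :=
    (hB ⟨p, hpd⟩).trans (mul_le_mul_of_nonneg_right (le_max_left _ _) (norm_nonneg _))
  rw [eval_eq_sum_degreeLTEquiv hpd]
  calc |∑ i, c i * t ^ (i : ℕ)| ≤ ∑ i : Fin d, ‖c‖ * |ρ| ^ (i : ℕ) := by
        refine (abs_sum_le_sum_abs _ _).trans (sum_le_sum fun i _ => ?_)
        rw [abs_mul, abs_pow]
        exact mul_le_mul (norm_le_pi_norm c i)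
          (pow_le_pow_left₀ (abs_nonneg t) (ht.trans (le_abs_self ρ)) i) (by positivity)
          (norm_nonneg _)
    _ ≤ max B 0 * ‖hermiteData kd (d - kd) α p‖ * ∑ i : Fin d, |ρ| ^ (i : ℕ) := by
        rw [← mul_sum]; gcongr
    _ = _ := by ring

theorem exists_abs_eval_le_of_scaled_hermiteData {d kd : ℕ} {α : ℝ} (hα : α ≠ 0)
    (a ρ : ℝ) :
    ∃ B, ∀ h, 0 < h → ∀ r : ℝ[X], r.degree < d → ∀ ε, 0 ≤ ε →
      (∀ j < kd, |(derivative^[j] r).eval a| * h ^ j ≤ ε) →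
      (∀ k : ℕ, 1 ≤ k → k ≤ d - kd → |r.eval (a + k * α * h)| ≤ ε) →
      ∀ x, |x - a| ≤ ρ * h → |r.eval x| ≤ B * ε := by
  obtain ⟨B, hB0, hB⟩ := exists_abs_eval_le_mul_norm_hermiteData (d := d) (kd := kd) hα ρ
  refine ⟨B, fun h hh r hr ε hε hder hval x hx => ?_⟩
  set s := (taylor a r).comp (C h * X)
  have hs_eval (t : ℝ) : s.eval t = r.eval (a + h * t) := by
    simp only [s, eval_comp, eval_mul, eval_C, eval_X, taylor_eval, add_comm]
  have hs_coeff (j : ℕ) : s.coeff j = (taylor a r).coeff j * h ^ j := comp_C_mul_X_coeff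
  have hs : s.degree < d := by
    rw [← degree_taylor r a, degree_lt_iff_coeff_zero] at hr
    rw [degree_lt_iff_coeff_zero]
    intro m hm
    rw [hs_coeff, hr m hm, zero_mul]
  have hdata : ‖hermiteData kd (d - kd) α s‖ ≤ ε := by
    rw [norm_prod_le_iff, pi_norm_le_iff_of_nonneg hε, pi_norm_le_iff_of_nonneg hε]
    refine ⟨fun j => ?_, fun k => ?_⟩
    · have hj := hder j j.2
      rw [iterate_derivative_eval_eq_factorial_mul_taylor_coeff, abs_mul, Nat.abs_cast] at hj
      change |s.coeff j| ≤ ε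
      rw [hs_coeff, abs_mul, abs_of_pos (pow_pos hh _)]
      refine le_trans ?_ hj
      gcongr
      exact le_mul_of_one_le_left (abs_nonneg _) (mod_cast (j : ℕ).factorial_pos)
    · obtain ⟨hk1, hk2⟩ := mem_Icc.1 k.2
      change |s.eval (k * α)| ≤ ε
      rw [hs_eval, mul_comm h]
      exact hval k hk1 hk2
  have ht : |(x - a) / h| ≤ ρ := by rwa [abs_div, abs_of_pos hh, div_le_iff₀ hh]
  calc |r.eval x| = |s.eval ((x - a) / h)| := by
        rw [hs_eval, mul_div_cancel₀ _ hh.ne', add_sub_cancel]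
    _ ≤ B * ‖hermiteData kd (d - kd) α s‖ := hB s hs _ ht
    _ ≤ B * ε := by gcongr

end Polynomial

theorem abs_le_mul_dist_pow_of_iteratedDeriv_eq_zero {g : ℝ → ℝ} {a R M : ℝ} {n : ℕ}
    (hg : ContDiff ℝ n g) (hzero : ∀ m < n, iteratedDeriv m g a = 0)
    (hbound : ∀ z ∈ closedBall a R, |iteratedDeriv n g z| ≤ M) :
    ∀ y ∈ closedBall a R, |g y| ≤ M * dist y a ^ n := by
  induction n generalizing g with
  | zero => simpa using hbound
  | succ n ih =>
    have hderiv : ∀ z ∈ closedBall a R, |deriv g z| ≤ M * dist z a ^ n :=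
      ih (hg.deriv' (n := n))
        (fun m hm => by simpa [← iteratedDeriv_succ'] using hzero (m + 1) (by omega))
        (by simpa [← iteratedDeriv_succ'] using hbound)
    intro y hy
    have hM : 0 ≤ M :=
      (abs_nonneg _).trans (hbound a (mem_closedBall_self (dist_nonneg.trans hy)))
    have hga : g a = 0 := by simpa using hzero 0 n.succ_pos
    have hball : closedBall a (dist y a) ⊆ closedBall a R := closedBall_subset_closedBall hy
    have hderiv_y : ∀ z ∈ closedBall a (dist y a), ‖deriv g z‖ ≤ M * dist y a ^ n :=
      fun z hz => (hderiv z (hball hz)).trans (by gcongr; exact mem_closedBall.1 hz)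
    have := (convex_closedBall a (dist y a)).norm_image_sub_le_of_norm_deriv_le
      (fun z _ => hg.differentiable (by simp) z) hderiv_y
      (mem_closedBall_self dist_nonneg) (mem_closedBall.2 le_rfl)
    rw [hga, sub_zero, Real.norm_eq_abs, ← dist_eq_norm] at this
    rwa [pow_succ, ← mul_assoc]

theorem exists_abs_sub_eval_le_of_iterate_derivative_eval_eq {u : ℝ → ℝ} {n : ℕ}
    (hu : ContDiff ℝ n u) {T : ℝ[X]} (hT : T.degree < n) {a : ℝ}
    (hTa : ∀ k < n, (derivative^[k] T).eval a = iteratedDeriv k u a) (R : ℝ) :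
    ∃ M, 0 ≤ M ∧ ∀ y ∈ closedBall a R, |u y - T.eval y| ≤ M * dist y a ^ n := by
  obtain ⟨M, hM⟩ := (isCompact_closedBall a R).exists_bound_of_continuousOn
    (hu.continuous_iteratedDeriv n le_rfl).continuousOn
  have hT' : ContDiff ℝ n fun x => T.eval x := by simpa using T.contDiff_aeval (𝕜 := ℝ) n
  have hsub : ∀ m ≤ n, ∀ z, iteratedDeriv m (fun y => u y - T.eval y) z =
      iteratedDeriv m u z - (derivative^[m] T).eval z := fun m hm z => by
    rw [iteratedDeriv_fun_sub (hu.contDiffAt.of_le (by exact_mod_cast hm))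
      (hT'.contDiffAt.of_le (by exact_mod_cast hm)), T.iteratedDeriv_eval]
  have hTn : derivative^[n] T = 0 := by
    rcases eq_or_ne T 0 with rfl | hT0
    · simp
    · exact iterate_derivative_eq_zero ((natDegree_lt_iff_degree_lt hT0).2 hT)
  refine ⟨max M 0, le_max_right _ _,
    abs_le_mul_dist_pow_of_iteratedDeriv_eq_zero (hu.sub hT')
      (fun m hm => by rw [hsub m hm.le, hTa m hm, sub_self]) fun z hz => ?_⟩
  rw [hsub n le_rfl, hTn, eval_zero, sub_zero]
  exact (hM z hz).trans (le_max_left _ _)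

theorem exists_abs_sub_eval_le_mul_pow_of_dist_le_mul {u : ℝ → ℝ} {n : ℕ}
    (hu : ContDiff ℝ n u) {T : ℝ[X]} (hT : T.degree < n) {a : ℝ}
    (hTa : ∀ k < n, (derivative^[k] T).eval a = iteratedDeriv k u a) (ρ : ℝ) :
    ∃ M, 0 ≤ M ∧ ∀ h, 0 ≤ h → h ≤ 1 → ∀ y, dist y a ≤ ρ * h →
      |u y - T.eval y| ≤ M * h ^ n := by
  obtain ⟨M, hM0, hM⟩ := exists_abs_sub_eval_le_of_iterate_derivative_eval_eq hu hT hTa |ρ|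
  refine ⟨M * |ρ| ^ n, by positivity, fun h h0 h1 y hy => ?_⟩
  have hy' : dist y a ≤ |ρ| * h := hy.trans (by gcongr; exact le_abs_self ρ)
  calc |u y - T.eval y| ≤ M * dist y a ^ n :=
        hM y (mem_closedBall.2 (hy'.trans (mul_le_of_le_one_right (abs_nonneg ρ) h1)))
    _ ≤ M * (|ρ| * h) ^ n := by gcongr
    _ = M * |ρ| ^ n * h ^ n := by ring

theorem hermite_extrapolation_accuracy_general
    (d kd : ℕ) (hkd : kd ≤ d)
    (α C A : ℝ) (hα : 0 < α) (hC : 0 < C) (hA : 0 ≤ A)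
    (u : ℝ → ℝ) (hu : ContDiff ℝ d u) :
    ∃ K h₀ : ℝ, 0 < h₀ ∧ ∀ h : ℝ, 0 < h → h ≤ h₀ →
      ∀ q : Polynomial ℝ, q.degree < (d : ℕ) →
        (∀ k < kd,
          |(Polynomial.derivative^[k] q).eval (-1) - iteratedDeriv k u (-1)|
            ≤ A * h ^ (d - k)) →
        (∀ k : ℕ, 1 ≤ k → k ≤ d - kd →
          |q.eval (-1 + (k : ℝ) * α * h) - u (-1 + (k : ℝ) * α * h)|
            ≤ A * h ^ d) →
        ∀ x : ℝ, |x - (-1)| ≤ C * h → |q.eval x - u x| ≤ K * h ^ d := by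
  obtain ⟨T, hTdeg, hT⟩ :=
    exists_degree_lt_iterate_derivative_eval_eq (-1 : ℝ) d fun k => iteratedDeriv k u (-1)
  obtain ⟨M, hM0, hM⟩ := exists_abs_sub_eval_le_mul_pow_of_dist_le_mul hu hTdeg hT (C + d * α)
  obtain ⟨B, hB⟩ :=
    exists_abs_eval_le_of_scaled_hermiteData (d := d) (kd := kd) hα.ne' (-1) C
  refine ⟨B * (A + M) + M, 1, one_pos, fun h hh hh1 q hq hder hval x hx => ?_⟩
  have hder' (j : ℕ) (hj : j < kd) :
      |(derivative^[j] (q - T)).eval (-1)| * h ^ j ≤ (A + M) * h ^ d := by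
    rw [iterate_derivative_sub, eval_sub, hT j (by omega)]
    calc _ ≤ A * h ^ (d - j) * h ^ j := by gcongr; exact hder j hj
      _ = A * h ^ d := by rw [mul_assoc, ← pow_add, Nat.sub_add_cancel (by omega)]
      _ ≤ (A + M) * h ^ d := by gcongr; linarith
  have hval' (k : ℕ) (hk1 : 1 ≤ k) (hk2 : k ≤ d - kd) :
      |(q - T).eval (-1 + k * α * h)| ≤ (A + M) * h ^ d := by
    have hk : dist (-1 + k * α * h) (-1) ≤ (C + d * α) * h := by
      rw [Real.dist_eq, add_sub_cancel_left, abs_of_nonneg (by positivity)]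
      calc k * α * h ≤ d * α * h := by gcongr; exact_mod_cast (by omega : k ≤ d)
        _ ≤ (C + d * α) * h := by gcongr; linarith
    rw [eval_sub, add_mul]
    exact (abs_sub_le _ _ _).trans (add_le_add (hval k hk1 hk2) (hM h hh.le hh1 _ hk))
  have hx' : dist x (-1) ≤ (C + d * α) * h :=
    hx.trans (by gcongr; exact le_add_of_nonneg_right (by positivity))
  have hqT : (q - T).degree < d := (degree_sub_le _ _).trans_lt (max_lt hq hTdeg)
  calc |q.eval x - u x| ≤ |(q - T).eval x| + |u x - T.eval x| := by
        rw [eval_sub, abs_sub_comm (u x)]; exact abs_sub_le _ _ _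
    _ ≤ B * ((A + M) * h ^ d) + M * h ^ d :=
        add_le_add (hB h hh _ hqT _ (by positivity) hder' hval' x hx) (hM h hh.le hh1 x hx')
    _ = (B * (A + M) + M) * h ^ d := by ring

/-- `d`-th order accuracy of the Hermite extrapolation: if `q` of degree `≤ d-1`
matches `k_d` derivatives of a `C^d` function `u` at `-1` with errors `O(h^{d-k})`
and `d - k_d` point values at `-1 + k α h` with errors `O(h^d)`, then
`|q(x) - u(x)| = O(h^d)` for `|x - (-1)| ≤ C h`. -/
theorem hermite_extrapolation_accuracy
    (d kd : ℕ) (hd : 1 ≤ d) (hkd : kd ≤ d)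
    (α C A : ℝ) (hα : 0 < α) (hC : 0 < C) (hA : 0 ≤ A)
    (u : ℝ → ℝ) (hu : ContDiff ℝ d u) :
    ∃ K h₀ : ℝ, 0 < h₀ ∧ ∀ h : ℝ, 0 < h → h ≤ h₀ →
      ∀ q : Polynomial ℝ, q.degree < (d : ℕ) →
        (∀ k < kd,
          |(Polynomial.derivative^[k] q).eval (-1) - iteratedDeriv k u (-1)|
            ≤ A * h ^ (d - k)) →
        (∀ k : ℕ, 1 ≤ k → k ≤ d - kd →
          |q.eval (-1 + (k : ℝ) * α * h) - u (-1 + (k : ℝ) * α * h)|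
            ≤ A * h ^ d) →
        ∀ x : ℝ, |x - (-1)| ≤ C * h → |q.eval x - u x| ≤ K * h ^ d :=
  hermite_extrapolation_accuracy_general d kd hkd α C A hα hC hA u hu
end

section
/- For a C^d function u and the interpolating polynomial p of degree ≤ d-1 at equally spaced interior nodes x_0, ..., x_{d-1} (with x_0 = -1 + C_a·h, C_a ∈ [0,1)), the auxiliary point values p(-1 + kαh) for k = 1, ..., d-k_d satisfy |p(-1 + kαh) - u(-1 + kαh)| = O(h^d), uniformly for α in a bounded set. -/
open Polynomial Set
open scoped Nat

lemma one_le_abs_nat_sub {i j : ℕ} (hij : i ≠ j) : (1 : ℝ) ≤ |(i : ℝ) - (j : ℝ)| := by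
  rcases lt_or_gt_of_ne hij with hlt | hlt
  · have h1 : (i : ℝ) + 1 ≤ j := by exact_mod_cast hlt
    rw [abs_sub_comm, abs_of_nonneg (by linarith)]
    linarith
  · have h1 : (j : ℝ) + 1 ≤ i := by exact_mod_cast hlt
    rw [abs_of_nonneg (by linarith)]
    linarith

set_option maxHeartbeats 1000000 in
/-- Accuracy of the auxiliary point values: for the polynomial `p` of degree
`≤ d-1` interpolating a `C^d` function `u` at equally spaced interior nodes
`x_j = -1 + (C_a + j)h`, the auxiliary values satisfy
`|p(-1 + k α h) - u(-1 + k α h)| ≤ K M h^d`, uniformly for `α` in `[0, A]`,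
`C_a ∈ [0,1)` and `1 ≤ k ≤ d`, where `K` depends only on `d` and `A`. -/
theorem auxiliary_point_accuracy
    (d : ℕ) (hd : 1 ≤ d) (A : ℝ) (hA : 0 < A) :
    ∃ K : ℝ, ∀ (u : ℝ → ℝ) (h Ca α M : ℝ) (k : ℕ),
      0 < h → 0 ≤ Ca → Ca < 1 → 0 ≤ α → α ≤ A → 1 ≤ k → k ≤ d →
      ContDiffOn ℝ d u (Icc (-1 : ℝ) (-1 + ((d : ℝ) + A * d) * h)) →
      (∀ y ∈ Icc (-1 : ℝ) (-1 + ((d : ℝ) + A * d) * h),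
        |iteratedDerivWithin d u (Icc (-1 : ℝ) (-1 + ((d : ℝ) + A * d) * h)) y| ≤ M) →
      ∀ p : Polynomial ℝ, p.degree < (d : ℕ) →
        (∀ j < d, p.eval (-1 + (Ca + (j : ℝ)) * h) = u (-1 + (Ca + (j : ℝ)) * h)) →
        |p.eval (-1 + (k : ℝ) * α * h) - u (-1 + (k : ℝ) * α * h)| ≤ K * M * h ^ d := by
  refine ⟨((d : ℝ) + 1) * ((d : ℝ) + A * d + 1) ^ (2 * d), ?_⟩
  intro u h Ca α M k hh hCa0 hCa1 hα0 hαA hk1 hkd hu hM p hpdeg hpint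
  obtain ⟨n, rfl⟩ : ∃ n, d = n + 1 := ⟨d - 1, (Nat.succ_pred_eq_of_pos hd).symm⟩
  set D : ℕ := n + 1 with hDdef
  set B : ℝ := (D : ℝ) + A * D + 1 with hBdef
  set b : ℝ := -1 + ((D : ℝ) + A * (D : ℝ)) * h with hbdef
  have hD1 : (1 : ℝ) ≤ (D : ℝ) := by exact_mod_cast hd
  have hB1 : (1 : ℝ) ≤ B := by nlinarith
  have hdB : (D : ℝ) ≤ B := by nlinarith
  have hab : (-1 : ℝ) ≤ b := by nlinarith
  set I : Set ℝ := Icc (-1 : ℝ) b with hIdef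
  have hM0 : 0 ≤ M := le_trans (abs_nonneg _) (hM (-1) ⟨le_rfl, hab⟩)
  set x : ℝ := -1 + (k : ℝ) * α * h with hxdef
  set v : ℕ → ℝ := fun j => -1 + (Ca + j) * h with hvdef
  have hkA : 0 ≤ (k : ℝ) * α ∧ (k : ℝ) * α ≤ (D : ℝ) * A := by
    have hkd' : (k : ℝ) ≤ D := by exact_mod_cast hkd
    refine ⟨by positivity, ?_⟩
    nlinarith [Nat.cast_nonneg (α := ℝ) k]
  have hvmem : ∀ j < D, v j ∈ I := by
    intro j hj
    have hj' : (j : ℝ) ≤ (D : ℝ) - 1 := by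
      have : (j : ℝ) + 1 ≤ D := by exact_mod_cast hj
      linarith
    constructor
    · simp only [hvdef]
      nlinarith [Nat.cast_nonneg (α := ℝ) j]
    · simp only [hvdef, hbdef]
      nlinarith [Nat.cast_nonneg (α := ℝ) j]
  have hxmem : x ∈ I := by
    constructor
    · simp only [hxdef]; nlinarith [hkA.1]
    · simp only [hxdef, hbdef]; nlinarith [hkA.2, hkA.1]
  have hu' : ContDiffOn ℝ (n + 1 : ℕ) u I := by exact_mod_cast hu
  -- Taylor estimates
  have taylor : ∀ t ∈ I, |u t - taylorWithinEval u n I (-1) t| ≤ M * (t + 1) ^ D / n ! := by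
    intro t ht
    have hC : ∀ y ∈ I, ‖iteratedDerivWithin (n + 1) u I y‖ ≤ M := by
      intro y hy
      simpa [Real.norm_eq_abs] using hM y hy
    have := taylor_mean_remainder_bound hab hu' ht hC
    simpa [Real.norm_eq_abs, sub_neg_eq_add] using this
  have taylor' : ∀ t ∈ I, 0 ≤ t + 1 → t + 1 ≤ B * h →
      |u t - taylorWithinEval u n I (-1) t| ≤ M * (B * h) ^ D := by
    intro t ht h0 h1
    refine le_trans (taylor t ht) ?_
    have hpow : (t + 1) ^ D ≤ (B * h) ^ D := pow_le_pow_left₀ h0 h1 D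
    have hfac : (1 : ℝ) ≤ n ! := by exact_mod_cast Nat.one_le_iff_ne_zero.mpr (Nat.factorial_ne_zero n)
    have hnum : M * (t + 1) ^ D ≤ M * (B * h) ^ D := by
      exact mul_le_mul_of_nonneg_left hpow hM0
    calc M * (t + 1) ^ D / n ! ≤ M * (t + 1) ^ D :=
          div_le_self (mul_nonneg hM0 (pow_nonneg h0 D)) hfac
      _ ≤ M * (B * h) ^ D := hnum
  -- The Taylor polynomial as a `Polynomial`
  set T : Polynomial ℝ := ∑ j ∈ Finset.range D,
      C ((j ! : ℝ)⁻¹ * iteratedDerivWithin j u I (-1)) * (X + 1) ^ j with hTdef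
  have hTeval : ∀ t : ℝ, T.eval t = taylorWithinEval u n I (-1) t := by
    intro t
    rw [taylor_within_apply, hTdef, eval_finset_sum]
    refine Finset.sum_congr rfl fun j _ => ?_
    simp only [eval_mul, eval_C, eval_pow, eval_add, eval_X, eval_one, smul_eq_mul,
      sub_neg_eq_add]
    ring
  have hTdeg : T.degree < (D : WithBot ℕ) := by
    refine lt_of_le_of_lt (degree_sum_le _ _) ?_
    rw [Finset.sup_lt_iff (by exact_mod_cast WithBot.bot_lt_coe D)]
    intro j hj
    refine lt_of_le_of_lt (degree_mul_le _ _) ?_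
    have h1 : (C ((j ! : ℝ)⁻¹ * iteratedDerivWithin j u I (-1))).degree ≤ 0 := degree_C_le
    have h2 : (((X : ℝ[X]) + 1) ^ j).degree ≤ (j : WithBot ℕ) := by
      refine le_trans (degree_pow_le _ _) ?_
      have hX1 : ((X : ℝ[X]) + 1).degree ≤ 1 := by
        refine le_trans (degree_add_le _ _) ?_
        simp [degree_X, degree_one]
      calc j • ((X : ℝ[X]) + 1).degree ≤ j • (1 : WithBot ℕ) :=
            nsmul_le_nsmul_right hX1 j
        _ = (j : WithBot ℕ) := by simp
    have hjD : (j : WithBot ℕ) < (D : WithBot ℕ) := by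
      exact_mod_cast Finset.mem_range.mp hj
    calc (C ((j ! : ℝ)⁻¹ * iteratedDerivWithin j u I (-1))).degree
          + (((X : ℝ[X]) + 1) ^ j).degree ≤ 0 + (j : WithBot ℕ) := add_le_add h1 h2
      _ = (j : WithBot ℕ) := by simp
      _ < (D : WithBot ℕ) := hjD
  -- Lagrange representation
  set s : Finset ℕ := Finset.range D with hsdef
  have hvinj : Set.InjOn v s := by
    intro i _ j _ hij
    simp only [hvdef] at hij
    have h1 : (Ca + (i : ℝ)) * h = (Ca + j) * h := by linarith
    have h2 : (i : ℝ) = j := by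
      have := mul_right_cancel₀ (ne_of_gt hh) h1
      linarith
    exact_mod_cast h2
  have hcard : s.card = D := Finset.card_range D
  have hpdeg' : p.degree < (s.card : WithBot ℕ) := by rw [hcard]; exact_mod_cast hpdeg
  have hTdeg' : T.degree < (s.card : WithBot ℕ) := by rw [hcard]; exact_mod_cast hTdeg
  have hp : p = Lagrange.interpolate s v (fun i => u (v i)) := by
    refine Lagrange.eq_interpolate_of_eval_eq _ hvinj hpdeg' ?_
    intro i hi
    exact hpint i (Finset.mem_range.mp hi)
  have hT : T = Lagrange.interpolate s v (fun i => T.eval (v i)) :=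
    Lagrange.eq_interpolate hvinj hTdeg'
  have key : p.eval x - T.eval x
      = ∑ i ∈ s, (u (v i) - T.eval (v i)) * (Lagrange.basis s v i).eval x := by
    conv_lhs => rw [hp, hT]
    rw [Lagrange.interpolate_apply, Lagrange.interpolate_apply, eval_finset_sum,
      eval_finset_sum, ← Finset.sum_sub_distrib]
    refine Finset.sum_congr rfl fun i _ => ?_
    simp only [eval_mul, eval_C]
    ring
  -- bound the Lagrange basis at x
  have hbasis : ∀ i ∈ s, |(Lagrange.basis s v i).eval x| ≤ B ^ D := by
    intro i hi
    rw [Lagrange.basis, eval_prod, Finset.abs_prod]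
    have hterm : ∀ j ∈ s.erase i, |(Lagrange.basisDivisor (v i) (v j)).eval x| ≤ B := by
      intro j hj
      obtain ⟨hij, hjs⟩ := Finset.mem_erase.mp hj
      have hjD : j < D := Finset.mem_range.mp hjs
      have hjD' : (j : ℝ) ≤ (D : ℝ) - 1 := by
        have : (j : ℝ) + 1 ≤ D := by exact_mod_cast hjD
        linarith
      have hvij : v i - v j = ((i : ℝ) - j) * h := by
        simp only [hvdef]; ring
      have hlow : h ≤ |v i - v j| := by
        rw [hvij, abs_mul, abs_of_pos hh]
        nlinarith [one_le_abs_nat_sub (Ne.symm hij), abs_nonneg ((i : ℝ) - j), hh]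
      have hupp : |x - v j| ≤ B * h := by
        have hxv : x - v j = ((k : ℝ) * α - (Ca + j)) * h := by
          simp only [hxdef, hvdef]; ring
        rw [hxv, abs_mul, abs_of_pos hh]
        have habs : |(k : ℝ) * α - (Ca + j)| ≤ B := by
          rw [abs_le]
          constructor
          · nlinarith [hkA.1, Nat.cast_nonneg (α := ℝ) j]
          · nlinarith [hkA.2, Nat.cast_nonneg (α := ℝ) j]
        nlinarith [abs_nonneg ((k : ℝ) * α - (Ca + j))]
      have heval : (Lagrange.basisDivisor (v i) (v j)).eval x = (v i - v j)⁻¹ * (x - v j) := by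
        simp [Lagrange.basisDivisor]
      rw [heval, abs_mul, abs_inv]
      have hpos : 0 < |v i - v j| := lt_of_lt_of_le hh hlow
      rw [inv_mul_le_iff₀ hpos]
      calc |x - v j| ≤ B * h := hupp
        _ ≤ B * |v i - v j| := by
            apply mul_le_mul_of_nonneg_left hlow (by linarith)
        _ = |v i - v j| * B := mul_comm _ _
    calc ∏ j ∈ s.erase i, |(Lagrange.basisDivisor (v i) (v j)).eval x|
        ≤ ∏ _j ∈ s.erase i, B := Finset.prod_le_prod (fun _ _ => abs_nonneg _) hterm
      _ = B ^ (s.erase i).card := by rw [Finset.prod_const]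
      _ ≤ B ^ D := by
          apply pow_le_pow_right₀ hB1
          exact le_trans (Finset.card_le_card (Finset.erase_subset _ _)) (by rw [hcard])
  -- node errors
  have hnode : ∀ i ∈ s, |u (v i) - T.eval (v i)| ≤ M * (B * h) ^ D := by
    intro i hi
    have hiD : i < D := Finset.mem_range.mp hi
    have hiD' : (i : ℝ) ≤ (D : ℝ) - 1 := by
      have : (i : ℝ) + 1 ≤ D := by exact_mod_cast hiD
      linarith
    rw [hTeval]
    refine taylor' (v i) (hvmem i hiD) ?_ ?_
    · simp only [hvdef]
      nlinarith [Nat.cast_nonneg (α := ℝ) i]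
    · simp only [hvdef]
      nlinarith [Nat.cast_nonneg (α := ℝ) i]
  -- error at x
  have hxT : |u x - T.eval x| ≤ M * (B * h) ^ D := by
    rw [hTeval]
    refine taylor' x hxmem ?_ ?_
    · simp only [hxdef]; nlinarith [hkA.1]
    · simp only [hxdef]; nlinarith [hkA.2]
  -- combine
  have hsum : |p.eval x - T.eval x| ≤ (D : ℝ) * (M * (B * h) ^ D * B ^ D) := by
    rw [key]
    refine le_trans (Finset.abs_sum_le_sum_abs _ _) ?_
    have hbd : ∀ i ∈ s, |(u (v i) - T.eval (v i)) * (Lagrange.basis s v i).eval x|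
        ≤ M * (B * h) ^ D * B ^ D := by
      intro i hi
      rw [abs_mul]
      exact mul_le_mul (hnode i hi) (hbasis i hi) (abs_nonneg _)
        (by positivity)
    refine le_trans (Finset.sum_le_sum hbd) ?_
    rw [Finset.sum_const, hcard, nsmul_eq_mul]
  have hfinal : |p.eval x - u x| ≤ ((D : ℝ) + 1) * B ^ (2 * D) * M * h ^ D := by
    have htri : |p.eval x - u x| ≤ |p.eval x - T.eval x| + |u x - T.eval x| := by
      have := abs_sub_le (p.eval x) (T.eval x) (u x)
      rw [abs_sub_comm (T.eval x) (u x)] at this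
      exact this
    have hBh : (B * h) ^ D = B ^ D * h ^ D := mul_pow B h D
    have hB2 : B ^ D ≤ B ^ (2 * D) := pow_le_pow_right₀ hB1 (by omega)
    have hBD0 : (0 : ℝ) ≤ B ^ D := by positivity
    have hhD0 : (0 : ℝ) ≤ h ^ D := by positivity
    calc |p.eval x - u x| ≤ (D : ℝ) * (M * (B * h) ^ D * B ^ D) + M * (B * h) ^ D :=
          le_trans htri (add_le_add hsum hxT)
      _ = (D : ℝ) * (B ^ D * B ^ D) * M * h ^ D + B ^ D * M * h ^ D := by
          rw [hBh]; ring
      _ ≤ (D : ℝ) * B ^ (2 * D) * M * h ^ D + B ^ (2 * D) * M * h ^ D := by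
          have h1 : B ^ D * B ^ D = B ^ (2 * D) := by
            rw [← pow_add]; ring_nf
          rw [h1]
          have : B ^ D * M * h ^ D ≤ B ^ (2 * D) * M * h ^ D := by
            apply mul_le_mul_of_nonneg_right _ hhD0
            exact mul_le_mul_of_nonneg_right hB2 hM0
          linarith
      _ = ((D : ℝ) + 1) * B ^ (2 * D) * M * h ^ D := by ring
  calc |p.eval x - u x| ≤ ((D : ℝ) + 1) * B ^ (2 * D) * M * h ^ D := hfinal
    _ = ((D : ℝ) + 1) * ((D : ℝ) + A * D + 1) ^ (2 * D) * M * h ^ D := by rw [hBdef]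
end
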